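/- arXiv:2405.04141 — 3 statements merged into one kernel-verified Lean document; each statement's English description precedes it below -/
import Mathlib

section
/- If G is a finite group isomorphic to the central product D₈^{∘n}, then the sum of the orders of all elements of G equals 6·2^{2n} − 2·2^n − 1. -/
open scoped IsMulCommutative

section AuxD8CentralPower

private lemma aux_d8_sq : ∀ g : DihedralGroup 4, g^2 = 1 ∨ g^2 = DihedralGroup.r 2 := by decide
private lemma aux_d8_comm : ∀ g : DihedralGroup 4, DihedralGroup.r 2 * g = g * DihedralGroup.r 2 := by decide
private lemma aux_d8_center : ∀ g : DihedralGroup 4, (∀ y, g * y = y * g) → (g = 1 ∨ g = DihedralGroup.r 2) := by decide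
private lemma aux_d8_ne : (DihedralGroup.r 2 : DihedralGroup 4) ≠ 1 := by decide
private lemma aux_d8_r2sq : (DihedralGroup.r 2 : DihedralGroup 4)^2 = 1 := by decide
private lemma aux_d8_card : Fintype.card (DihedralGroup 4) = 8 := by rw [DihedralGroup.card]
private lemma aux_d8_count : Fintype.card {g : DihedralGroup 4 // g ^ 2 = 1} = 6 := by decide

private lemma aux_pow_val_add {M : Type*} [Monoid M] {x : M} (hx : x ^ 2 = 1) (a b : ZMod 2) :
    x ^ (a + b).val = x ^ a.val * x ^ b.val := by
  rcases (by decide : ∀ a b : ZMod 2, a.val + b.val = (a+b).val ∨ a.val + b.val = (a+b).val + 2) a b with h | h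
  · rw [← pow_add, h]
  · rw [← pow_add, h, pow_add, hx, mul_one]

private lemma aux_noncommProd_pow {G : Type*} [Group G] {ι : Type*} [DecidableEq ι] (z : G) (hz : z ≠ 1)
    (f : ι → G) [DecidablePred fun i => f i ≠ 1] :
    ∀ (s : Finset ι), (∀ i ∈ s, f i = 1 ∨ f i = z) → ∀ comm,
      s.noncommProd f comm = z ^ (s.filter fun i => f i ≠ 1).card := by
  intro s
  induction s using Finset.induction_on with
  | empty => intro _ _; simp
  | @insert a s ha ih =>
    intro hf comm
    rw [Finset.noncommProd_insert_of_notMem s a f comm ha, Finset.filter_insert,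
      ih (fun i hi => hf i (Finset.mem_insert_of_mem hi)) _]
    rcases hf a (Finset.mem_insert_self a s) with h1 | h1
    · rw [if_neg (by simp [h1]), h1, one_mul]
    · rw [if_pos (by simp [h1, hz]), Finset.card_insert_of_notMem (by simp [ha]), h1, pow_succ']

private lemma aux_noncommProd_coe {G : Type*} [Group G] {ι : Type*} (g : ι → Subgroup.center G)
    (s : Finset ι) (comm) :
    s.noncommProd (fun i => ((g i : G))) comm = ((∏ i ∈ s, g i : Subgroup.center G) : G) := by
  have h1 : (Subgroup.center G).subtype (s.noncommProd g (fun x _ y _ _ => Commute.all (g x) (g y))) =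
      s.noncommProd (fun i => ((g i : G))) comm :=
    Finset.map_noncommProd s g _ ((Subgroup.center G).subtype)
  rw [← h1, Finset.noncommProd_eq_prod]
  rfl

private lemma aux_card_two {M : Type*} [Group M] [Finite M] (R : Subgroup M) (hcard : Nat.card R ≤ 2)
    {a b : M} (ha : a ∈ R) (hb : b ∈ R) (ha1 : a ≠ 1) (hb1 : b ≠ 1) : a = b := by
  classical
  by_contra hab
  haveI : Fintype R := Fintype.ofFinite R
  have h3 : ({(⟨1, R.one_mem⟩ : R), ⟨a, ha⟩, ⟨b, hb⟩} : Finset R).card = 3 := by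
    rw [Finset.card_insert_of_notMem (by simp [Subtype.ext_iff, ha1.symm, hb1.symm]),
      Finset.card_insert_of_notMem (by simp [Subtype.ext_iff, hab]), Finset.card_singleton]
  have h4 := Finset.card_le_univ ({(⟨1, R.one_mem⟩ : R), ⟨a, ha⟩, ⟨b, hb⟩} : Finset R)
  rw [h3, ← Nat.card_eq_fintype_card] at h4
  omega

private lemma aux_zmod_01 : (0 : ZMod 2) ≠ 1 := by decide
private lemma aux_zmod_10 : (1 : ZMod 2) ≠ 0 := by decide
private lemma aux_val0 : (0 : ZMod 2).val = 0 := by decide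
private lemma aux_val1 : (1 : ZMod 2).val = 1 := by decide

private lemma aux_dvd_four : ∀ d : ℕ, d ∣ 4 → d = 1 ∨ d = 2 ∨ d = 4 := by
  intro d hd
  have hle : d ≤ 4 := Nat.le_of_dvd (by norm_num) hd
  interval_cases d <;> revert hd <;> decide

end AuxD8CentralPower

/-- `G` is the (internal) central product of the family of subgroups `H`:
the subgroups pairwise commute elementwise and generate `G`. -/
def IsCentralProduct {G : Type*} [Group G] {ι : Type*} (H : ι → Subgroup G) : Prop :=
  (∀ i j, i ≠ j → ∀ x ∈ H i, ∀ y ∈ H j, Commute x y) ∧ (⨆ i, H i) = ⊤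

/-- If `G ≅ D₈^{∘n}` (the extraspecial 2-group of order `2^(2n+1)` of plus type),
then the sum of the orders of all elements of `G` is `6·2^(2n) − 2·2^n − 1`. -/
theorem psi_of_D8_central_power {n : ℕ} (hn : 1 ≤ n)
    (G : Type*) [Group G] [Fintype G]
    (H : Fin n → Subgroup G)
    (hcp : IsCentralProduct H)
    (hD8 : ∀ i, Nonempty (H i ≃* DihedralGroup 4))
    (hcard : Nat.card G = 2 ^ (2 * n + 1)) :
    ∑ x : G, orderOf x = 6 * 2 ^ (2 * n) - 2 * 2 ^ n - 1 := by
  classical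
  obtain ⟨hcomm0, hgen⟩ := hcp
  haveI : Fact (Nat.Prime 2) := ⟨by norm_num⟩
  obtain ⟨m', rfl⟩ : ∃ m', n = m' + 1 := ⟨n - 1, by omega⟩
  set K : ℕ := 2 ^ m' with hK
  have hKpos : 0 < K := Nat.pow_pos (by norm_num)
  have hC : Pairwise fun i j : Fin (m'+1) => ∀ x y : G, x ∈ H i → y ∈ H j → Commute x y :=
    fun i j hij x y hx hy => hcomm0 i j hij x hx y hy
  set φ := Subgroup.noncommPiCoprod hC with hφdef
  have hsurj : Function.Surjective φ := by
    rw [← MonoidHom.range_eq_top, Subgroup.noncommPiCoprod_range]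
    exact hgen
  have e : ∀ i, H i ≃* DihedralGroup 4 := fun i => (hD8 i).some
  -- the central elements
  set z' : ∀ i, H i := fun i => (e i).symm (DihedralGroup.r 2) with hz'def
  set z : Fin (m'+1) → G := fun i => (z' i : G) with hzdef
  have hz_mem : ∀ i, z i ∈ H i := fun i => (z' i).2
  have hz'_ne : ∀ i, z' i ≠ (1 : H i) := by
    intro i h
    have h2 := congrArg (e i) h
    rw [MulEquiv.apply_symm_apply, map_one] at h2
    exact aux_d8_ne h2
  have hz_ne : ∀ i, z i ≠ 1 := by
    intro i h
    exact hz'_ne i (Subtype.ext h)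
  have hz'_sq : ∀ i, z' i ^ 2 = 1 := by
    intro i
    apply (e i).injective
    rw [map_pow, MulEquiv.apply_symm_apply, map_one]
    exact aux_d8_r2sq
  have hz_sq : ∀ i, z i ^ 2 = 1 := by
    intro i
    have := congrArg (Subtype.val) (hz'_sq i)
    simpa using this
  have hsq : ∀ i (u : H i), ((u : G))^2 = 1 ∨ ((u : G))^2 = z i := by
    intro i u
    rcases aux_d8_sq (e i u) with h | h
    · left
      have h2 : u ^ 2 = 1 := by
        apply (e i).injective; rw [map_pow, map_one]; exact h
      have := congrArg (Subtype.val) h2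
      simpa using this
    · right
      have h2 : u ^ 2 = z' i := by
        apply (e i).injective; rw [map_pow, MulEquiv.apply_symm_apply]; exact h
      have := congrArg (Subtype.val) h2
      simpa [hzdef] using this
  have hz_commH : ∀ i (u : H i), (z i) * u = u * (z i) := by
    intro i u
    have h8 : (DihedralGroup.r 2) * (e i u) = (e i u) * DihedralGroup.r 2 := aux_d8_comm _
    have h2 : z' i * u = u * z' i := by
      apply (e i).injective
      rw [map_mul, map_mul, MulEquiv.apply_symm_apply]
      exact h8
    exact congrArg (Subtype.val) h2
  have hz_central : ∀ i (x : G), Commute (z i) x := by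
    intro i x
    have hx : x ∈ ⨆ j, H j := by rw [hgen]; exact Subgroup.mem_top x
    refine Subgroup.iSup_induction H (C := fun y => Commute (z i) y) hx ?_ (Commute.one_right _)
      (fun a b ha hb => ha.mul_right hb)
    intro j y hy
    by_cases hij : i = j
    · subst hij; exact hz_commH i ⟨y, hy⟩
    · exact hcomm0 i j hij _ (hz_mem i) y hy
  -- cardinalities
  have hcardHi : ∀ i, Fintype.card (H i) = 8 := fun i => by
    rw [← aux_d8_card]; exact Fintype.card_congr (e i).toEquiv
  have hcardS : Fintype.card (∀ i, H i) = 8 ^ (m'+1) := by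
    rw [Fintype.card_pi]
    simp [hcardHi]
  -- kernel cardinality
  have hcardker : Nat.card φ.ker = K := by
    have h1 := Subgroup.card_eq_card_quotient_mul_card_subgroup φ.ker
    have h2 : Nat.card ((∀ i, H i) ⧸ φ.ker) = Nat.card G :=
      Nat.card_congr (QuotientGroup.quotientKerEquivOfSurjective φ hsurj).toEquiv
    rw [h2, hcard, Nat.card_eq_fintype_card, hcardS] at h1
    have h8 : (8:ℕ)^(m'+1) = 2^(2*(m'+1)+1) * K := by
      rw [hK, show (8:ℕ) = 2^3 from rfl, ← pow_mul, ← pow_add]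
      congr 1
      omega
    rw [h8] at h1
    exact (Nat.eq_of_mul_eq_mul_left (by positivity) h1.symm)
  -- a formula for φ
  have happ : ∀ h : ∀ i, H i, φ h = Finset.univ.noncommProd (fun i => ((h i : G)))
      (fun a _ b _ hab => hcomm0 a b hab _ (h a).2 _ (h b).2) := fun h => rfl
  -- coordinates of kernel elements are 1 or z'
  have hker_coord : ∀ c : ∀ i, H i, c ∈ φ.ker → ∀ i, c i = 1 ∨ c i = z' i := by
    intro c hc i
    have hφc : φ c = 1 := hc
    rw [happ] at hφc
    rw [← Finset.insert_erase (Finset.mem_univ i)] at hφc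
    replace hφc := (Finset.noncommProd_insert_of_notMem _ _ (fun i => ((c i : G)))
      (fun a _ b _ hab => hcomm0 a b hab _ (c a).2 _ (c b).2) (Finset.notMem_erase i _)).symm.trans hφc
    obtain ⟨R, hmul, hRcomm⟩ : ∃ R : G, ((c i : G)) * R = 1 ∧ ∀ u : H i, Commute (u : G) R := by
      refine ⟨_, hφc, ?_⟩
      intro u
      apply Finset.noncommProd_commute
      intro j hj
      have hji : j ≠ i := (Finset.mem_erase.mp hj).1
      exact hcomm0 i j (fun hh => hji (hh.symm)) _ u.2 _ (c j).2
    have hci : ((c i : G)) = R⁻¹ := eq_inv_of_mul_eq_one_left hmul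
    -- c i commutes with every element of H i
    have hcomm_ci : ∀ u : H i, (c i) * u = u * (c i) := by
      intro u
      have hcu : Commute (u : G) ((c i : G)) := by rw [hci]; exact (hRcomm u).inv_right
      exact Subtype.ext hcu.symm.eq
    -- transport to the dihedral group
    have hd : ∀ y : DihedralGroup 4, (e i (c i)) * y = y * (e i (c i)) := by
      intro y
      have h2 := congrArg (e i) (hcomm_ci ((e i).symm y))
      rw [map_mul, map_mul, MulEquiv.apply_symm_apply] at h2
      exact h2
    rcases aux_d8_center _ hd with h | h
    · left
      apply (e i).injective; rw [map_one]; exact h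
    · right
      apply (e i).injective; rw [hz'def, MulEquiv.apply_symm_apply]; exact h
  -- the center and the ρ homomorphism
  have hzC : ∀ i, z i ∈ Subgroup.center G :=
    fun i => Subgroup.mem_center_iff.mpr fun g => ((hz_central i g).symm).eq
  set zc : Fin (m'+1) → Subgroup.center G := fun i => ⟨z i, hzC i⟩ with hzc
  have hzc_sq : ∀ i, zc i ^ 2 = 1 := fun i => Subtype.ext (by simpa using hz_sq i)
  have hzc_ne : ∀ i, zc i ≠ 1 := fun i h => hz_ne i (congrArg Subtype.val h)
  set ρ : Multiplicative (∀ i : Fin (m'+1), ZMod 2) →* Subgroup.center G :=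
    MonoidHom.mk' (fun v => ∏ i, zc i ^ ((Multiplicative.toAdd v) i).val) (by
      intro a b
      rw [← Finset.prod_mul_distrib]
      exact Finset.prod_congr rfl fun i _ => aux_pow_val_add (hzc_sq i) _ _) with hρ
  have happρ : ∀ v : ∀ i : Fin (m'+1), ZMod 2,
      ρ (Multiplicative.ofAdd v) = ∏ j, zc j ^ (v j).val := fun v => rfl
  -- injection of ker φ into ker ρ
  have hθ : ∀ c : φ.ker, (Multiplicative.ofAdd
      (fun i => if (c : ∀ i, H i) i = 1 then (0 : ZMod 2) else 1)) ∈ ρ.ker := by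
    intro c
    have hcoord := hker_coord c c.2
    have h2 : ((ρ (Multiplicative.ofAdd
        (fun i => if (c : ∀ i, H i) i = 1 then (0 : ZMod 2) else 1)) : Subgroup.center G) : G)
        = φ (c : ∀ i, H i) := by
      rw [happ, happρ]
      have hcm : ((Finset.univ : Finset (Fin (m'+1))) : Set (Fin (m'+1))).Pairwise
          (Function.onFun Commute fun i =>
            ((zc i ^ ((if (c : ∀ i, H i) i = 1 then (0 : ZMod 2) else 1)).val : Subgroup.center G) : G)) := by
        intro x _ y _ _
        simp only [Function.onFun]
        have hx := Subgroup.mem_center_iff.mp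
          (zc x ^ ((if (c : ∀ i, H i) x = 1 then (0 : ZMod 2) else 1)).val).2
        exact (hx _).symm
      rw [← aux_noncommProd_coe (fun i => zc i ^ ((if (c : ∀ i, H i) i = 1 then (0 : ZMod 2) else 1)).val)
        Finset.univ hcm]
      refine (Finset.noncommProd_congr rfl ?_ _).symm
      intro i _
      rcases hcoord i with h | h
      · simp [h, aux_val0]
      · have hne : (c : ∀ i, H i) i ≠ 1 := by rw [h]; exact hz'_ne i
        rw [if_neg hne, h, aux_val1, pow_one]
    rw [MonoidHom.mem_ker]
    apply Subtype.ext
    rw [h2]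
    have hck := c.2
    rw [MonoidHom.mem_ker] at hck
    rw [hck]
    rfl
  have hkerρ_ge : K ≤ Nat.card ρ.ker := by
    rw [← hcardker]
    apply Nat.card_le_card_of_injective
      (fun c : φ.ker => (⟨_, hθ c⟩ : ρ.ker))
    intro c d hcd
    have h2 : (fun i => if (c : ∀ i, H i) i = 1 then (0 : ZMod 2) else 1)
        = (fun i => if (d : ∀ i, H i) i = 1 then (0 : ZMod 2) else 1) := by
      have := congrArg Subtype.val hcd
      simpa using this
    apply Subtype.ext
    funext i
    have h3 := congrFun h2 i
    rcases hker_coord c c.2 i with hc1 | hc1 <;> rcases hker_coord d d.2 i with hd1 | hd1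
    · rw [hc1, hd1]
    · exfalso
      rw [if_pos hc1, if_neg (fun hh => hz'_ne i (hd1.symm.trans hh))] at h3
      exact aux_zmod_01 h3
    · exfalso
      rw [if_neg (fun hh => hz'_ne i (hc1.symm.trans hh)), if_pos hd1] at h3
      exact aux_zmod_10 h3
    · rw [hc1, hd1]
  -- the range of ρ has at most 2 elements
  have hcard_dom : Nat.card (Multiplicative (∀ i : Fin (m'+1), ZMod 2)) = 2 * K := by
    have h1 : Nat.card (Multiplicative (∀ i : Fin (m'+1), ZMod 2))
        = Nat.card (∀ i : Fin (m'+1), ZMod 2) := Nat.card_congr Multiplicative.toAdd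
    rw [h1, Nat.card_eq_fintype_card, Fintype.card_pi]
    simp only [ZMod.card, Finset.prod_const, Finset.card_univ, Fintype.card_fin]
    rw [hK, pow_succ]
    ring
  have hrange_le : Nat.card ρ.range ≤ 2 := by
    have h1 := Subgroup.card_eq_card_quotient_mul_card_subgroup ρ.ker
    have h2 : Nat.card (Multiplicative (∀ i : Fin (m'+1), ZMod 2) ⧸ ρ.ker) = Nat.card ρ.range :=
      Nat.card_congr (QuotientGroup.quotientKerEquivRange ρ).toEquiv
    rw [h2, hcard_dom] at h1
    by_contra hlt
    push_neg at hlt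
    have h3 : 3 * K ≤ Nat.card ρ.range * Nat.card ρ.ker := Nat.mul_le_mul hlt hkerρ_ge
    rw [← h1] at h3
    omega
  have hz_in_range : ∀ i, zc i ∈ ρ.range := by
    intro i
    refine ⟨Multiplicative.ofAdd (Pi.single i (1 : ZMod 2)), ?_⟩
    rw [happρ]
    rw [Finset.prod_eq_single_of_mem i (Finset.mem_univ i)
      (fun j _ hj => by rw [Pi.single_eq_of_ne hj, aux_val0, pow_zero])]
    rw [Pi.single_eq_same, aux_val1, pow_one]
  have hzz : ∀ i j, z i = z j := by
    intro i j
    have h2 := aux_card_two ρ.range hrange_le (hz_in_range i) (hz_in_range j) (hzc_ne i) (hzc_ne j)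
    exact congrArg Subtype.val h2
  set z₀ := z ⟨0, by omega⟩ with hz₀def
  have hzeq : ∀ i, z i = z₀ := fun i => hzz i _
  have hz₀ne : z₀ ≠ 1 := hz_ne _
  have hz₀sq : z₀ ^ 2 = 1 := hz_sq _
  have horder_z : orderOf z₀ = 2 := orderOf_eq_prime hz₀sq hz₀ne
  -- the square of each element
  set m : (∀ i, H i) → ℕ := fun h => (Finset.univ.filter fun i => ((h i : G))^2 ≠ 1).card with hm
  have hφsq : ∀ h : ∀ i, H i, (φ h)^2 = z₀ ^ m h := by
    intro h
    rw [← map_pow, happ]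
    have hcong : Finset.univ.noncommProd (fun i => (((h^2) i : G)))
          (fun a _ b _ hab => hcomm0 a b hab _ ((h^2) a).2 _ ((h^2) b).2)
        = Finset.univ.noncommProd (fun i => ((h i : G))^2)
          (fun a ha b hb hab => by
            dsimp only [Function.onFun]
            exact ((hcomm0 a b hab _ (h a).2 _ (h b).2).pow_pow 2 2)) := by
      refine Finset.noncommProd_congr rfl ?_ _
      intro i _
      push_cast [Pi.pow_apply]
      ring
    rw [hcong]
    exact (aux_noncommProd_pow z₀ hz₀ne (fun i => ((h i : G))^2) Finset.univ
      (fun i _ => (hzeq i) ▸ hsq i (h i)) _)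
  -- the order of each element
  have horder_eq : ∀ h : ∀ i, H i,
      orderOf (φ h) + (if Even (m h) then 2 else 0) + (if φ h = 1 then 1 else 0) = 4 := by
    intro h
    have hsq2 := hφsq h
    by_cases h1 : φ h = 1
    · have heven : Even (m h) := by
        have hz1 : z₀ ^ m h = 1 := by rw [← hsq2, h1, one_pow]
        have hdvd := orderOf_dvd_of_pow_eq_one hz1
        rw [horder_z] at hdvd
        exact even_iff_two_dvd.mpr hdvd
      rw [h1, orderOf_one, if_pos heven, if_pos rfl]
    · by_cases h2 : Even (m h)
      · have hx2 : (φ h)^2 = 1 := by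
          rw [hsq2]
          obtain ⟨t, ht⟩ := h2
          rw [ht, ← two_mul, pow_mul, hz₀sq, one_pow]
        rw [orderOf_eq_prime hx2 h1, if_pos h2, if_neg h1]
      · have hx2ne : (φ h)^2 ≠ 1 := by
          rw [hsq2]
          intro hcon
          have hdvd := orderOf_dvd_of_pow_eq_one hcon
          rw [horder_z] at hdvd
          exact h2 (even_iff_two_dvd.mpr hdvd)
        have hx4 : (φ h)^4 = 1 := by
          have h44 : (φ h)^4 = ((φ h)^2)^2 := by rw [← pow_mul]
          rw [h44, hsq2, ← pow_mul, mul_comm, pow_mul, hz₀sq, one_pow]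
        have hdvd : orderOf (φ h) ∣ 4 := orderOf_dvd_of_pow_eq_one hx4
        have hne1 : orderOf (φ h) ≠ 1 := by simpa [orderOf_eq_one_iff] using h1
        have hne2 : orderOf (φ h) ≠ 2 := by
          intro hcon
          apply hx2ne
          rw [← hcon]
          exact pow_orderOf_eq_one _
        rcases aux_dvd_four _ hdvd with h4 | h4 | h4
        · exact absurd h4 hne1
        · exact absurd h4 hne2
        · rw [h4, if_neg h2, if_neg h1]
  -- fibre counting
  have hker_filter : (Finset.univ.filter fun h : (∀ i, H i) => φ h = 1).card = K := by
    rw [← hcardker]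
    have h1 : Nat.card φ.ker = Fintype.card {h : ∀ i, H i // φ h = 1} := by
      rw [Nat.card_eq_fintype_card]
      exact Fintype.card_congr (Equiv.subtypeEquivRight fun _ => MonoidHom.mem_ker)
    rw [h1, Fintype.card_subtype]
  have hfib : ∀ y : G, (Finset.univ.filter fun h : (∀ i, H i) => φ h = y).card = K := by
    intro y
    obtain ⟨h₀, hh₀⟩ := hsurj y
    rw [← hker_filter]
    apply Finset.card_nbij' (fun h => h * h₀⁻¹) (fun h => h * h₀)
    · intro a ha
      simp only [Finset.mem_coe, Finset.mem_filter, Finset.mem_univ, true_and] at ha ⊢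
      rw [map_mul, ha, map_inv, hh₀, mul_inv_cancel]
    · intro a ha
      simp only [Finset.mem_coe, Finset.mem_filter, Finset.mem_univ, true_and] at ha ⊢
      rw [map_mul, ha, one_mul, hh₀]
    · intro a _; simp
    · intro a _; simp
  have hsum1 : ∑ h : (∀ i, H i), orderOf (φ h) = K * ∑ x : G, orderOf x := by
    rw [← Finset.sum_fiberwise' Finset.univ φ (fun x => orderOf x), Finset.mul_sum]
    exact Finset.sum_congr rfl fun y _ => by rw [Finset.sum_const, hfib y, smul_eq_mul]
  -- counting elements with even m
  set N := (Finset.univ.filter fun h : (∀ i, H i) => Even (m h)).card with hNdef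
  have hcnt : ∀ i, (Finset.univ.filter fun u : H i => ((u:G))^2 = 1).card = 6 := by
    intro i
    have hiff : ∀ u : H i, (((u:G))^2 = 1) ↔ ((e i u)^2 = 1) := by
      intro u
      constructor
      · intro hu
        have hu2 : u^2 = 1 := Subtype.ext (by simpa using hu)
        rw [← map_pow, hu2, map_one]
      · intro hu
        have hu2 : u^2 = 1 := (e i).injective (by rw [map_pow, hu, map_one])
        have := congrArg Subtype.val hu2
        simpa using this
    have h2 : Fintype.card {u : H i // ((u:G))^2 = 1} = 6 :=
      (Fintype.card_congr (Equiv.subtypeEquiv (e i).toEquiv hiff)).trans aux_d8_count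
    rw [← h2, Fintype.card_subtype]
  have hsum_i : ∀ i, (∑ u : H i, if ((u:G))^2 = 1 then (1:ℤ) else -1) = 4 := by
    intro i
    rw [Finset.sum_ite, Finset.sum_const, Finset.sum_const, hcnt i]
    have hneg : (Finset.univ.filter fun u : H i => ¬ ((u:G))^2 = 1).card = 2 := by
      have h3 := Finset.card_filter_add_card_filter_not
        (s := (Finset.univ : Finset (H i))) (p := fun u : H i => ((u:G))^2 = 1)
      rw [Finset.card_univ, hcardHi i, hcnt i] at h3
      omega
    rw [hneg]
    norm_num
  have hNval : 2 * N = 8^(m'+1) + 4^(m'+1) := by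
    have hkey : (∑ h : ∀ i, H i, ∏ i, (if ((h i : G))^2 = 1 then (1:ℤ) else -1)) = 4^(m'+1) := by
      rw [← Fintype.prod_sum (fun i (u : H i) => if ((u:G))^2 = 1 then (1:ℤ) else -1)]
      rw [Finset.prod_congr rfl (fun i _ => hsum_i i), Finset.prod_const, Finset.card_univ,
        Fintype.card_fin]
    have hpt : ∀ h : ∀ i, H i, (∏ i, (if ((h i : G))^2 = 1 then (1:ℤ) else -1))
        = if Even (m h) then (1:ℤ) else -1 := by
      intro h
      rw [Finset.prod_ite, Finset.prod_const, Finset.prod_const, one_pow, one_mul]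
      have hmm : (Finset.univ.filter fun i => ¬ ((h i:G))^2 = 1).card = m h := rfl
      rw [hmm]
      rcases Nat.even_or_odd (m h) with he | ho
      · rw [if_pos he, he.neg_one_pow]
      · rw [if_neg (Nat.not_even_iff_odd.mpr ho), ho.neg_one_pow]
    rw [Finset.sum_congr rfl (fun h _ => hpt h)] at hkey
    rw [Finset.sum_ite, Finset.sum_const, Finset.sum_const] at hkey
    have hnn : N + (Finset.univ.filter fun h : (∀ i, H i) => ¬ Even (m h)).card = 8^(m'+1) := by
      have h3 := Finset.card_filter_add_card_filter_not
        (s := (Finset.univ : Finset (∀ i, H i))) (p := fun h : (∀ i, H i) => Even (m h))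
      rw [Finset.card_univ, hcardS] at h3
      exact h3
    simp only [nsmul_eq_mul, mul_one, mul_neg_one] at hkey
    have hb : ((4:ℕ)^(m'+1) : ℤ) = (4:ℤ)^(m'+1) := by push_cast; ring
    rw [← hb] at hkey
    omega
  -- the main sum identity
  have hmain : (∑ h : (∀ i, H i), orderOf (φ h)) + 2 * N + K = 4 * 8^(m'+1) := by
    have h1 : ∑ h : (∀ i, H i), (orderOf (φ h) + (if Even (m h) then 2 else 0)
        + (if φ h = 1 then 1 else 0)) = ∑ _h : (∀ i, H i), 4 :=
      Finset.sum_congr rfl fun h _ => horder_eq h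
    rw [Finset.sum_add_distrib, Finset.sum_add_distrib, Finset.sum_ite, Finset.sum_const,
      Finset.sum_const, Finset.sum_ite, Finset.sum_const, Finset.sum_const,
      Finset.sum_const, Finset.card_univ, hcardS, hker_filter] at h1
    simp only [smul_eq_mul, mul_zero, add_zero, mul_one, mul_zero] at h1
    omega
  -- final arithmetic
  have h8K : (8:ℕ)^(m'+1) = 8 * K^3 := by
    rw [hK, show (8:ℕ) = 2^3 from rfl, ← pow_mul, ← pow_mul, ← pow_add]
    congr 1
    omega
  have h4K : (4:ℕ)^(m'+1) = 4 * K^2 := by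
    rw [hK, show (4:ℕ) = 2^2 from rfl, ← pow_mul, ← pow_mul, ← pow_add]
    congr 1
    omega
  have h2K : (2:ℕ)^(m'+1) = 2 * K := by
    rw [hK, pow_succ]
    ring
  have h22K : (2:ℕ)^(2*(m'+1)) = 4 * K^2 := by
    rw [hK, show (4:ℕ) = 2^2 from rfl, ← pow_mul, ← pow_add]
    congr 1
    omega
  have hEq2 : K * (∑ x : G, orderOf x) + (8*K^3 + 4*K^2) + K = 4 * (8*K^3) := by
    rw [← h8K, ← h4K, ← hNval, ← hsum1]
    exact hmain
  have hψ : (∑ x : G, orderOf x) + 4*K + 1 = 24 * K^2 := by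
    have hEqZ : (K:ℤ) * ((∑ x : G, orderOf x : ℕ) : ℤ) + (8*(K:ℤ)^3 + 4*(K:ℤ)^2) + (K:ℤ)
        = 4 * (8*(K:ℤ)^3) := by exact_mod_cast hEq2
    have hgoalZ : (K:ℤ) * (((∑ x : G, orderOf x : ℕ) : ℤ) + 4*(K:ℤ) + 1)
        = (K:ℤ) * (24*(K:ℤ)^2) := by linear_combination hEqZ
    have hc := mul_left_cancel₀ (show (K:ℤ) ≠ 0 by positivity) hgoalZ
    exact_mod_cast hc
  rw [h22K, h2K]
  set A := K ^ 2 with hA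
  omega
end

section
/- If G is a finite group isomorphic to the central product D₈^{∘(n−1)} ∘ Q₈ (the extraspecial 2-group of order 2^{2n+1} of minus type, n ≥ 1), then the number of elements of order 2 in G is 4^n − 2^n − 1, the number of elements of order 4 is 4^n + 2^n, and ψ(G) = 6·2^{2n} + 2·2^n − 1. -/
/-- The number of elements of order `m` in a group `H`. -/
noncomputable def numOfOrder (H : Type*) [Group H] (m : ℕ) : ℕ :=
  Nat.card {x : H // orderOf x = m}

private lemma card_subtype_comp {α β : Type*} [Group α] [Group β] (f : α →* β)
    (hf : Function.Surjective f) (p : β → Prop) :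
    Nat.card {a : α // p (f a)} = Nat.card f.ker * Nat.card {b : β // p b} := by
  classical
  have hsec : ∀ b : β, f (Function.surjInv hf b) = b := Function.surjInv_eq hf
  have e : {a : α // p (f a)} ≃ f.ker × {b : β // p b} := by
    refine ⟨fun a => ⟨⟨(Function.surjInv hf (f a.1))⁻¹ * a.1, ?_⟩, ⟨f a.1, a.2⟩⟩,
      fun bk => ⟨Function.surjInv hf bk.2.1 * bk.1.1, ?_⟩, ?_, ?_⟩
    · simp [MonoidHom.mem_ker, hsec]
    · have hk : f bk.1.1 = 1 := bk.1.2
      simpa [hsec, hk] using bk.2.2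
    · rintro ⟨a, ha⟩
      simp
    · rintro ⟨⟨k, hk⟩, ⟨b, hb⟩⟩
      have hk' : f k = 1 := hk
      simp [hsec, hk']
  rw [Nat.card_congr e, Nat.card_prod]

private lemma eq_of_card_two {Q : Type*} [Group Q] (h : Nat.card Q = 2) {x y : Q}
    (hx : x ≠ 1) (hy : y ≠ 1) : x = y := by
  classical
  have : Finite Q := Nat.finite_of_card_ne_zero (by omega)
  by_contra hne
  letI := Fintype.ofFinite Q
  have hc : Fintype.card Q = 2 := by rw [← Nat.card_eq_fintype_card, h]
  have h3 : ({1, x, y} : Finset Q).card = 3 := by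
    rw [Finset.card_insert_of_notMem (by simp [Ne.symm hx, Ne.symm hy]),
      Finset.card_insert_of_notMem (by simp [hne]), Finset.card_singleton]
  have := Finset.card_le_univ ({1, x, y} : Finset Q)
  rw [h3] at this
  omega

private def chi : ZMod 2 → ℤ := fun a => if a = 0 then 1 else -1

private lemma chi_add : ∀ a b : ZMod 2, chi (a + b) = chi a * chi b := by decide

private lemma chi_sum {ι : Type*} (u : Finset ι) (g : ι → ZMod 2) :
    chi (∑ i ∈ u, g i) = ∏ i ∈ u, chi (g i) := by
  classical
  induction u using Finset.induction_on with
  | empty => simp [chi]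
  | insert _ _ h ih => rw [Finset.sum_insert h, Finset.prod_insert h, chi_add, ih]

private lemma sum_chi_eq {T : Type*} [Fintype T] (s : T → ZMod 2)
    [DecidablePred fun x => s x = 0] :
    ∑ x : T, chi (s x) =
      2 * ((Finset.univ.filter fun x => s x = 0).card : ℤ) - Fintype.card T := by
  classical
  rw [← Finset.sum_filter_add_sum_filter_not Finset.univ (fun x => s x = 0)]
  have h1 : ∑ x ∈ Finset.univ.filter (fun x => s x = 0), chi (s x)
      = ((Finset.univ.filter fun x => s x = 0).card : ℤ) := by
    rw [Finset.sum_congr rfl (fun x hx => ?_), Finset.sum_const, nsmul_eq_mul, mul_one]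
    simp only [Finset.mem_filter] at hx
    simp [chi, hx.2]
  have h2 : ∑ x ∈ Finset.univ.filter (fun x => ¬ s x = 0), chi (s x)
      = -((Finset.univ.filter fun x => ¬ s x = 0).card : ℤ) := by
    rw [Finset.sum_congr rfl (fun x hx => ?_), Finset.sum_const, nsmul_eq_mul, mul_neg_one]
    simp only [Finset.mem_filter] at hx
    simp [chi, hx.2]
  rw [h1, h2]
  have h3 := Finset.card_filter_add_card_filter_not (s := (Finset.univ : Finset T))
    (p := fun x => s x = 0)
  have h4 : Fintype.card T = Finset.univ.card := rfl
  rw [h4, ← h3]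
  push_cast
  ring

private lemma parity_count {ι : Type*} [Fintype ι] [DecidableEq ι] (T : ι → Type*)
    [∀ i, Fintype (T i)] [∀ i, DecidableEq (T i)] (s : ∀ i, T i → ZMod 2) :
    2 * ((Finset.univ.filter fun t : ∀ i, T i => ∑ i, s i (t i) = 0).card : ℤ)
      = ∏ i, (Fintype.card (T i) : ℤ) + ∏ i, ∑ x : T i, chi (s i x) := by
  classical
  have key : ∏ i, ∑ x : T i, chi (s i x) = ∑ t : ∀ i, T i, chi (∑ i, s i (t i)) := by
    rw [Finset.prod_univ_sum]
    rw [← Fintype.piFinset_univ]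
    exact Finset.sum_congr rfl fun t _ => (chi_sum Finset.univ fun i => s i (t i)).symm
  rw [key, sum_chi_eq (fun t : ∀ i, T i => ∑ i, s i (t i))]
  rw [Fintype.card_pi]
  push_cast
  ring

private lemma noncommProd_pow {M : Type*} [Monoid M] (ζ : M) {ι : Type*} (s : Finset ι)
    (v : ι → ℕ) (comm) :
    s.noncommProd (fun i => ζ ^ v i) comm = ζ ^ ∑ i ∈ s, v i := by
  induction s using Finset.cons_induction with
  | empty => simp
  | cons a s ha ih => rw [Finset.noncommProd_cons, ih, Finset.sum_cons, pow_add]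

private lemma cardD8sq : Nat.card {y : DihedralGroup 4 // y ^ 2 = 1} = 6 := by
  rw [Nat.card_eq_fintype_card]; decide

private lemma cardQ8sq : Nat.card {y : QuaternionGroup 2 // y ^ 2 = 1} = 2 := by
  rw [Nat.card_eq_fintype_card]; decide

private lemma cardD8' : Nat.card (DihedralGroup 4) = 8 := by
  rw [Nat.card_eq_fintype_card]; decide

private lemma cardQ8' : Nat.card (QuaternionGroup 2) = 8 := by
  rw [Nat.card_eq_fintype_card]; decide

private lemma arith4 (x A : ℕ) (hx : 2 ≤ x) (hA : A = x * x - x) :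
    2 * (x * x) - A = x * x + x := by
  have hxx : 2 * x ≤ x * x := Nat.mul_le_mul_right x hx
  omega

private lemma arithPsi (x A : ℕ) (hx : 2 ≤ x) (hA : A = x * x - x) :
    1 + 2 * (A - 1) + 4 * (2 * (x * x) - A) = 6 * (x * x) + 2 * x - 1 := by
  have hxx : 2 * x ≤ x * x := Nat.mul_le_mul_right x hx
  omega

private lemma exists_zeta_of_iso {K M : Type*} [Group K] [Group M] (e : K ≃* M) (zM : M)
    (h1 : zM ≠ 1) (h2 : zM ^ 2 = 1) (h3 : ∀ y : M, y ^ 2 = 1 ∨ y ^ 2 = zM)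
    (h4 : ∀ y : M, (∀ x, x * y = y * x) → y = 1 ∨ y = zM) {c : ℕ}
    (h5 : Nat.card {y : M // y ^ 2 = 1} = c) :
    ∃ ζ : K, ζ ≠ 1 ∧ ζ ^ 2 = 1 ∧ (∀ x : K, x ^ 2 = 1 ∨ x ^ 2 = ζ) ∧
      (∀ x : K, (∀ y, y * x = x * y) → x = 1 ∨ x = ζ) ∧
      Nat.card {x : K // x ^ 2 = 1} = c := by
  refine ⟨e.symm zM, ?_, ?_, ?_, ?_, ?_⟩
  · intro h
    apply h1
    have := congrArg e h
    simpa using this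
  · rw [← map_pow, h2, map_one]
  · intro x
    rcases h3 (e x) with h | h
    · left; apply e.injective; rw [map_pow, h, map_one]
    · right; apply e.injective; rw [map_pow, h]; simp
  · intro x hx
    have hx' : ∀ y : M, y * e x = e x * y := by
      intro y
      apply e.symm.injective
      simpa using hx (e.symm y)
    rcases h4 (e x) hx' with h | h
    · left; apply e.injective; simpa using h
    · right; apply e.injective; simpa using h
  · rw [← h5]
    exact Nat.card_congr (Equiv.subtypeEquiv e.toEquiv (fun x =>
      ⟨fun h => show (e x) ^ 2 = 1 by rw [← map_pow, h, map_one],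
       fun h => e.injective (by rw [map_pow, map_one]; exact h)⟩))

/-- If `G ≅ D₈^{∘(n−1)} ∘ Q₈` (the extraspecial 2-group of order `2^(2n+1)` of
minus type, `n ≥ 1`), then `n₂(G) = 4^n − 2^n − 1`, `n₄(G) = 4^n + 2^n` and
`ψ(G) = 6·2^(2n) + 2·2^n − 1`. -/
theorem card_orders_psi_of_D8_Q8_central_product {n : ℕ} (hn : 1 ≤ n)
    (G : Type*) [Group G] [Fintype G]
    (H : Option (Fin (n - 1)) → Subgroup G)
    (hcp : IsCentralProduct H)
    (hD8 : ∀ i : Fin (n - 1), Nonempty (H (some i) ≃* DihedralGroup 4))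
    (hQ8 : Nonempty (H none ≃* QuaternionGroup 2))
    (hcard : Nat.card G = 2 ^ (2 * n + 1)) :
    numOfOrder G 2 = 4 ^ n - 2 ^ n - 1 ∧ numOfOrder G 4 = 4 ^ n + 2 ^ n ∧
      ∑ x : G, orderOf x = 6 * 2 ^ (2 * n) + 2 * 2 ^ n - 1 := by
  classical
  obtain ⟨hcomm, hgen⟩ := hcp
  have hcomm' : Pairwise fun i j : Option (Fin (n - 1)) =>
      ∀ x y : G, x ∈ H i → y ∈ H j → Commute x y :=
    fun i j hij x y hx hy => hcomm i j hij x hx y hy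
  set f := Subgroup.noncommPiCoprod hcomm' with hf_def
  have hsurj : Function.Surjective f :=
    MonoidHom.range_eq_top.mp (by rw [Subgroup.noncommPiCoprod_range]; exact hgen)
  -- the distinguished central element of each factor
  have hzex : ∀ i, ∃ ζ : H i, ζ ≠ 1 ∧ ζ ^ 2 = 1 ∧ (∀ x : H i, x ^ 2 = 1 ∨ x ^ 2 = ζ) ∧
      (∀ x : H i, (∀ y, y * x = x * y) → x = 1 ∨ x = ζ) ∧
      Nat.card {x : H i // x ^ 2 = 1} = (if i.isSome then 6 else 2) := by
    intro i
    cases i with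
    | none =>
      obtain ⟨e⟩ := hQ8
      exact exists_zeta_of_iso e (QuaternionGroup.a 2) (by decide) (by decide)
        (by decide) (by decide) cardQ8sq
    | some i =>
      obtain ⟨e⟩ := hD8 i
      exact exists_zeta_of_iso e (DihedralGroup.r 2) (by decide) (by decide)
        (by decide) (by decide) cardD8sq
  choose z hz1 hz2 hz3 hz4 hz5 using hzex
  -- each factor has 8 elements
  have hcard8 : ∀ i, Nat.card (H i) = 8 := by
    intro i
    cases i with
    | none =>
      obtain ⟨e⟩ := hQ8
      rw [Nat.card_congr e.toEquiv]
      exact cardQ8'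
    | some i =>
      obtain ⟨e⟩ := hD8 i
      rw [Nat.card_congr e.toEquiv]
      exact cardD8'
  have hcardι : Fintype.card (Option (Fin (n - 1))) = n := by
    simp [Fintype.card_option]
    omega
  have hPi : Nat.card (∀ i, H i) = 2 ^ (3 * n) := by
    rw [Nat.card_pi]
    simp only [hcard8]
    rw [Finset.prod_const, Finset.card_univ, hcardι]
    rw [show (8 : ℕ) = 2 ^ 3 by norm_num, ← pow_mul]
  -- cardinality of the kernel
  have hker : Nat.card f.ker = 2 ^ (n - 1) := by
    have h1 := Subgroup.card_eq_card_quotient_mul_card_subgroup f.ker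
    have h2 : Nat.card ((∀ i, H i) ⧸ f.ker) = Nat.card G :=
      Nat.card_congr (QuotientGroup.quotientKerEquivOfSurjective f hsurj).toEquiv
    rw [hPi, h2, hcard] at h1
    have h3 : (2 : ℕ) ^ (3 * n) = 2 ^ (2 * n + 1) * 2 ^ (n - 1) := by
      rw [← pow_add]
      congr 1
      omega
    rw [h3] at h1
    exact (Nat.eq_of_mul_eq_mul_left (by positivity) h1.symm)
  -- every coordinate of a kernel element is 1 or z i
  have hker_coord : ∀ k ∈ f.ker, ∀ i, k i = 1 ∨ k i = z i := by
    intro k hk i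
    apply hz4 i
    intro y
    set c : ∀ j, H j := k * Pi.mulSingle i y * k⁻¹ * (Pi.mulSingle i y)⁻¹ with hc_def
    have hcj : c = Pi.mulSingle i (c i) := by
      funext j
      by_cases hji : j = i
      · subst hji; simp
      · simp [hc_def, Pi.mulSingle_eq_of_ne hji]
    have hk1 : f k = 1 := hk
    have hfc : f c = 1 := by
      simp only [hc_def, map_mul, map_inv, hk1]
      group
    rw [hcj, Subgroup.noncommPiCoprod_mulSingle] at hfc
    have hci : c i = 1 := by
      ext
      simpa using hfc
    have h1 : k i * y * (k i)⁻¹ * y⁻¹ = 1 := by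
      have h0 : c i = k i * y * (k i)⁻¹ * y⁻¹ := by
        simp [hc_def]
      rw [← h0, hci]
    have h2 : k i * y * (k i)⁻¹ = y := mul_inv_eq_one.mp h1
    exact (mul_inv_eq_iff_eq_mul.mp h2).symm
  -- the subgroup generated by the central elements
  have hmemZp : ∀ t : ∀ i, H i, (∀ i, t i = 1 ∨ t i = z i) →
      t ∈ Subgroup.pi Set.univ (fun i => Subgroup.zpowers (z i)) := by
    intro t ht
    rw [Subgroup.mem_pi]
    intro i _
    rcases ht i with h | h
    · rw [h]; exact one_mem _
    · rw [h]; exact Subgroup.mem_zpowers _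
  set Zp : Subgroup (∀ i, H i) := Subgroup.pi Set.univ (fun i => Subgroup.zpowers (z i))
    with hZp_def
  have hkerZp : f.ker ≤ Zp := fun k hk => hmemZp k (hker_coord k hk)
  have hordz : ∀ i, orderOf (z i) = 2 := fun i => orderOf_eq_prime (hz2 i) (hz1 i)
  have hZpcard : Nat.card Zp = 2 ^ n := by
    have e1 : ↥Zp ≃ ∀ i, Subgroup.zpowers (z i) :=
      { toFun := fun t i => ⟨t.1 i, (Subgroup.mem_pi _).mp t.2 i (Set.mem_univ i)⟩
        invFun := fun u => ⟨fun i => u i, (Subgroup.mem_pi _).mpr fun i _ => (u i).2⟩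
        left_inv := fun t => Subtype.ext (funext fun i => rfl)
        right_inv := fun u => funext fun i => Subtype.ext rfl }
    rw [Nat.card_congr e1, Nat.card_pi]
    have hcz : ∀ i, Nat.card (Subgroup.zpowers (z i)) = 2 := fun i => by
      rw [Nat.card_zpowers, hordz i]
    simp only [hcz]
    rw [Finset.prod_const, Finset.card_univ, hcardι]
  set K' : Subgroup ↥Zp := f.ker.comap Zp.subtype with hK'_def
  have hK'card : Nat.card K' = 2 ^ (n - 1) := by
    have e2 : ↥K' ≃ ↥f.ker :=
      { toFun := fun x => ⟨x.1.1, x.2⟩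
        invFun := fun k => ⟨⟨k.1, hkerZp k.2⟩, k.2⟩
        left_inv := fun x => rfl
        right_inv := fun k => rfl }
    rw [Nat.card_congr e2, hker]
  have hQcard : Nat.card (↥Zp ⧸ K') = 2 := by
    have h1 := Subgroup.card_eq_card_quotient_mul_card_subgroup K'
    rw [hZpcard, hK'card] at h1
    have h2 : (2 : ℕ) ^ n = 2 * 2 ^ (n - 1) := by
      rw [← pow_succ']
      congr 1
      omega
    rw [h2] at h1
    exact Nat.eq_of_mul_eq_mul_right (by positivity) h1.symm
  have hsingle_mem : ∀ i, Pi.mulSingle i (z i) ∈ Zp := by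
    intro i
    apply hmemZp
    intro j
    by_cases hji : j = i
    · subst hji; right; simp
    · left; exact Pi.mulSingle_eq_of_ne hji _
  have hfsingle : ∀ i, f (Pi.mulSingle i (z i)) = ((z i : G)) := fun i =>
    Subgroup.noncommPiCoprod_mulSingle i (z i)
  -- the central elements all coincide in G
  have hzeq : ∀ i, ((z i : G)) = ((z none : G)) := by
    intro i
    by_cases hi : i = none
    · rw [hi]
    · set u : ↥Zp := ⟨Pi.mulSingle i (z i), hsingle_mem i⟩ with hu_def
      set v : ↥Zp := ⟨Pi.mulSingle none (z none), hsingle_mem none⟩ with hv_def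
      have hmk : ∀ w : ↥Zp, ((w : ↥Zp ⧸ K') = 1 ↔ f w.1 = 1) := by
        intro w
        rw [QuotientGroup.eq_one_iff]
        exact Iff.rfl
      have hu : ((u : ↥Zp ⧸ K')) ≠ 1 := by
        intro h
        have h' : f (Pi.mulSingle i (z i)) = 1 := (hmk u).mp h
        rw [hfsingle i] at h'
        exact hz1 i (by simpa using h')
      have hv : ((v : ↥Zp ⧸ K')) ≠ 1 := by
        intro h
        have h' : f (Pi.mulSingle none (z none)) = 1 := (hmk v).mp h
        rw [hfsingle none] at h'
        exact hz1 none (by simpa using h')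
      have huv : ((u : ↥Zp ⧸ K')) = ((v : ↥Zp ⧸ K')) := eq_of_card_two hQcard hu hv
      have h3 : u⁻¹ * v ∈ K' := QuotientGroup.eq.mp huv
      have h4 : f ((u⁻¹ * v : ↥Zp) : ∀ i, H i) = 1 := h3
      have h5 : ((z i : G))⁻¹ * ((z none : G)) = 1 := by
        have : ((u⁻¹ * v : ↥Zp) : ∀ i, H i)
            = (Pi.mulSingle i (z i))⁻¹ * Pi.mulSingle none (z none) := rfl
        rw [this, map_mul, map_inv, hfsingle, hfsingle] at h4
        exact h4
      have := inv_mul_eq_one.mp h5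
      exact this
  set ζ : G := ((z none : G)) with hzeta_def
  have hζ2 : ζ ^ 2 = 1 := by
    rw [hzeta_def]
    exact_mod_cast congrArg (fun w : H none => (w : G)) (hz2 none)
  have hζ1 : ζ ≠ 1 := by
    rw [hzeta_def]
    simpa using hz1 none
  have hordζ : orderOf ζ = 2 := orderOf_eq_prime hζ2 hζ1
  set s : ∀ i, (H i) → ZMod 2 := fun i x => if x ^ 2 = 1 then 0 else 1 with hs_def
  have hsq_coe : ∀ i (x : H i), ((x : G)) ^ 2 = ζ ^ (s i x).val := by
    intro i x
    by_cases hx : x ^ 2 = 1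
    · have h1 : ((x : G)) ^ 2 = 1 := by exact_mod_cast congrArg (fun w : H i => (w : G)) hx
      simp [hs_def, hx, h1]
    · have hx2 : x ^ 2 = z i := (hz3 i x).resolve_left hx
      have h1 : ((x : G)) ^ 2 = ((z i : G)) := by
        exact_mod_cast congrArg (fun w : H i => (w : G)) hx2
      rw [h1, hzeq i, hs_def]
      simp only [hx, if_false, if_neg]
      rw [show (ZMod.val (1 : ZMod 2)) = 1 from rfl, pow_one]
  have hft : ∀ t : ∀ i, H i, f t ^ 2 = ζ ^ (∑ i, (s i (t i)).val) := by
    intro t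
    have h1 : f t ^ 2 = f (t ^ 2) := (map_pow f t 2).symm
    have h2 := MonoidHom.noncommPiCoprod_apply (fun i => (H i).subtype)
      (hcomm := Subgroup.commute_subtype_of_commute hcomm') (t ^ 2)
    have h3 := Finset.noncommProd_congr (rfl : (Finset.univ : Finset (Option (Fin (n - 1)))) = Finset.univ)
      (f := fun i => ((H i).subtype ((t ^ 2) i)))
      (g := fun i => ζ ^ (s i (t i)).val)
      (fun i _ => by
        show (((t i) ^ 2 : H i) : G) = ζ ^ (s i (t i)).val
        push_cast
        exact hsq_coe i (t i))
      (fun a _ b _ hab => hcomm' hab _ _ ((t ^ 2) a).2 ((t ^ 2) b).2)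
    rw [h1]
    exact (h2.trans h3).trans (noncommProd_pow ζ Finset.univ _ _)
  have hpow4 : ∀ g : G, g ^ 4 = 1 := by
    intro g
    obtain ⟨t, rfl⟩ := hsurj g
    rw [show (4 : ℕ) = 2 * 2 from rfl, pow_mul, hft, ← pow_mul, mul_comm, pow_mul, hζ2,
      one_pow]
  have hsq_iff : ∀ t : ∀ i, H i, (f t ^ 2 = 1 ↔ (∑ i, s i (t i)) = 0) := by
    intro t
    rw [hft, ← orderOf_dvd_iff_pow_eq_one, hordζ]
    have hcast : ∀ a : ZMod 2, ((a.val : ℕ) : ZMod 2) = a := by decide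
    constructor
    · intro h
      have h2 := (ZMod.natCast_eq_zero_iff _ 2).mpr h
      rw [Nat.cast_sum] at h2
      simpa [hcast] using h2
    · intro h
      apply (ZMod.natCast_eq_zero_iff _ 2).mp
      rw [Nat.cast_sum]
      simpa [hcast] using h
  letI : ∀ i, Fintype (H i) := fun i => Fintype.ofFinite _
  letI : ∀ i, DecidableEq (H i) := fun i => Classical.decEq _
  set A : ℕ := Nat.card {g : G // g ^ 2 = 1} with hA_def
  clear_value A
  have hE1 : Nat.card {t : ∀ i, H i // (f t) ^ 2 = 1} = 2 ^ (n - 1) * A := by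
    rw [hA_def, ← hker]
    exact card_subtype_comp f hsurj (fun g => g ^ 2 = 1)
  have hAfil : (Finset.univ.filter fun g : G => g ^ 2 = 1).card = A := by
    rw [hA_def, Nat.card_eq_fintype_card, Fintype.card_subtype]
  clear hA_def
  set E : ℕ := (Finset.univ.filter fun t : ∀ i, H i => ∑ i, s i (t i) = 0).card with hE_def
  clear_value E
  have hE2 : Nat.card {t : ∀ i, H i // (f t) ^ 2 = 1} = E := by
    rw [Nat.card_congr (Equiv.subtypeEquivRight hsq_iff), Nat.card_eq_fintype_card,
      Fintype.card_subtype, hE_def]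
  have hkey := parity_count (fun i => (H i : Type _)) s
  have hchi : ∀ i, (∑ x : H i, chi (s i x)) = (if i.isSome then (4 : ℤ) else -4) := by
    intro i
    rw [sum_chi_eq (s i)]
    have hfil : (Finset.univ.filter fun x : H i => s i x = 0)
        = (Finset.univ.filter fun x : H i => x ^ 2 = 1) := by
      apply Finset.filter_congr
      intro x _
      rw [hs_def]
      by_cases hx : x ^ 2 = 1 <;> simp [hx]
    have hfc : (Finset.univ.filter fun x : H i => x ^ 2 = 1).card
        = Nat.card {x : H i // x ^ 2 = 1} := by
      rw [Nat.card_eq_fintype_card, Fintype.card_subtype]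
    have hcardF : (Fintype.card (H i) : ℤ) = 8 := by
      rw [← Nat.card_eq_fintype_card, hcard8 i]
      norm_num
    rw [hfil, hfc, hz5 i, hcardF]
    cases i <;> norm_num
  have hprodchi : (∏ i, ∑ x : H i, chi (s i x)) = -4 * 4 ^ (n - 1) := by
    simp only [hchi]
    rw [Fintype.prod_option]
    norm_num
  have hprodcard : (∏ i, (Fintype.card (H i) : ℤ)) = 2 ^ (3 * n) := by
    have h8 : ∀ i, (Fintype.card (H i) : ℤ) = 8 := fun i => by
      rw [← Nat.card_eq_fintype_card, hcard8 i]; norm_num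
    simp only [h8]
    rw [Finset.prod_const, Finset.card_univ, hcardι]
    rw [show (8 : ℤ) = 2 ^ 3 by norm_num, ← pow_mul]
  rw [hprodcard, hprodchi, ← hE_def] at hkey
  clear hE_def
  -- solve for A
  have hAval : A = 4 ^ n - 2 ^ n := by
    have hEA : (E : ℤ) = 2 ^ (n - 1) * A := by exact_mod_cast hE2.symm.trans hE1
    rw [hEA] at hkey
    have hn1 : n - 1 + 1 = n := by omega
    have h2n : (2 : ℤ) ^ n = 2 * 2 ^ (n - 1) := by
      calc (2 : ℤ) ^ n = 2 ^ (n - 1 + 1) := by rw [hn1]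
      _ = 2 * 2 ^ (n - 1) := by rw [pow_succ]; ring
    have h4n : (-4 : ℤ) * 4 ^ (n - 1) = -(2 ^ (2 * n)) := by
      have h1 : (4 : ℤ) ^ (n - 1 + 1) = 4 ^ n := by rw [hn1]
      rw [show (-4 : ℤ) * 4 ^ (n - 1) = -(4 ^ (n - 1 + 1)) by ring, h1,
        show (4 : ℤ) = 2 ^ 2 by norm_num, ← pow_mul]
    have h3n : (2 : ℤ) ^ (3 * n) = 2 ^ n * 2 ^ (2 * n) := by
      rw [← pow_add, show n + 2 * n = 3 * n by ring]
    have hnn : (2 : ℤ) ^ n * 2 ^ n = 2 ^ (2 * n) := by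
      rw [← pow_add, show n + n = 2 * n by ring]
    have hmain : (2 : ℤ) ^ n * (A : ℤ) = 2 ^ n * (2 ^ (2 * n) - 2 ^ n) := by
      have hL : 2 * ((2 : ℤ) ^ (n - 1) * (A : ℤ)) = 2 ^ n * A := by
        rw [h2n]; ring
      rw [hL, h4n, h3n] at hkey
      ring_nf
      ring_nf at hkey hnn
      linarith
    have hA' : (A : ℤ) = 2 ^ (2 * n) - 2 ^ n := mul_left_cancel₀ (by positivity) hmain
    have h2le : (2 : ℕ) ^ n ≤ 4 ^ n := Nat.pow_le_pow_left (by norm_num) n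
    have hcast : ((4 ^ n - 2 ^ n : ℕ) : ℤ) = 2 ^ (2 * n) - 2 ^ n := by
      rw [Nat.cast_sub h2le]
      push_cast
      rw [show ((4 : ℤ)) ^ n = 2 ^ (2 * n) by
        rw [show (4 : ℤ) = 2 ^ 2 by norm_num, ← pow_mul]]
    exact_mod_cast hA'.trans hcast.symm
  -- translate to filters on G
  have hnum : ∀ m : ℕ, numOfOrder G m = (Finset.univ.filter fun g : G => orderOf g = m).card := by
    intro m
    rw [numOfOrder, Nat.card_eq_fintype_card, Fintype.card_subtype]
  have horder2 : ∀ g : G, orderOf g = 2 ↔ (g ^ 2 = 1 ∧ g ≠ 1) := by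
    intro g
    constructor
    · intro h
      refine ⟨?_, ?_⟩
      · rw [← h]; exact pow_orderOf_eq_one g
      · intro h1; rw [h1, orderOf_one] at h; omega
    · rintro ⟨h1, h2⟩
      exact orderOf_eq_prime h1 h2
  have horder4 : ∀ g : G, orderOf g = 4 ↔ ¬ g ^ 2 = 1 := by
    intro g
    constructor
    · intro h hsq
      have hd := orderOf_dvd_of_pow_eq_one hsq
      rw [h] at hd
      norm_num at hd
    · intro hsq
      have hdvd : orderOf g ∣ 4 := orderOf_dvd_of_pow_eq_one (hpow4 g)
      have hle : orderOf g ≤ 4 := Nat.le_of_dvd (by norm_num) hdvd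
      interval_cases h : orderOf g
      · norm_num at hdvd
      · exact absurd (by rw [orderOf_eq_one_iff.mp h]; exact one_pow 2) hsq
      · exact absurd (by rw [← h]; exact pow_orderOf_eq_one g) hsq
      · norm_num at hdvd
      · rfl
  have h1mem : (1 : G) ∈ Finset.univ.filter (fun g : G => g ^ 2 = 1) := by simp
  have hfil2 : (Finset.univ.filter fun g : G => orderOf g = 2)
      = (Finset.univ.filter fun g : G => g ^ 2 = 1).erase 1 := by
    ext g
    simp only [Finset.mem_filter, Finset.mem_erase, Finset.mem_univ, true_and, horder2 g]
    tauto
  have hcard2 : numOfOrder G 2 = A - 1 := by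
    rw [hnum 2, hfil2, Finset.card_erase_of_mem h1mem, hAfil]
  have hfil4 : (Finset.univ.filter fun g : G => orderOf g = 4)
      = Finset.univ.filter fun g : G => ¬ g ^ 2 = 1 := by
    ext g
    simp only [Finset.mem_filter, Finset.mem_univ, true_and, horder4 g]
  have hcardG : Fintype.card G = 2 ^ (2 * n + 1) := by
    rw [← Nat.card_eq_fintype_card, hcard]
  have hnotcard : (Finset.univ.filter fun g : G => ¬ g ^ 2 = 1).card = 2 ^ (2 * n + 1) - A := by
    have h := Finset.card_filter_add_card_filter_not
      (s := (Finset.univ : Finset G)) (p := fun g : G => g ^ 2 = 1)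
    rw [hAfil, Finset.card_univ, hcardG] at h
    omega
  have hcard4 : numOfOrder G 4 = 2 ^ (2 * n + 1) - A := by
    rw [hnum 4, hfil4, hnotcard]
  have hsum : ∑ x : G, orderOf x = 1 + 2 * (A - 1) + 4 * (2 ^ (2 * n + 1) - A) := by
    rw [← Finset.sum_filter_add_sum_filter_not Finset.univ (fun g : G => g ^ 2 = 1)]
    have hs1 : ∑ g ∈ Finset.univ.filter (fun g : G => g ^ 2 = 1), orderOf g
        = 1 + 2 * (A - 1) := by
      rw [← Finset.sum_erase_add _ _ h1mem, orderOf_one]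
      have hset : ∀ g ∈ (Finset.univ.filter (fun g : G => g ^ 2 = 1)).erase 1,
          orderOf g = 2 := by
        intro g hg
        rw [Finset.mem_erase, Finset.mem_filter] at hg
        exact orderOf_eq_prime hg.2.2 hg.1
      rw [Finset.sum_congr rfl hset, Finset.sum_const,
        Finset.card_erase_of_mem h1mem, hAfil, smul_eq_mul]
      have hA1 : 1 ≤ A := by
        rw [← hAfil]
        exact Finset.card_pos.mpr ⟨1, h1mem⟩
      omega
    have hs2 : ∑ g ∈ Finset.univ.filter (fun g : G => ¬ g ^ 2 = 1), orderOf g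
        = 4 * (2 ^ (2 * n + 1) - A) := by
      have hset : ∀ g ∈ Finset.univ.filter (fun g : G => ¬ g ^ 2 = 1), orderOf g = 4 := by
        intro g hg
        rw [Finset.mem_filter] at hg
        exact (horder4 g).mpr hg.2
      rw [Finset.sum_congr rfl hset, Finset.sum_const, hnotcard, smul_eq_mul]
      ring
    rw [hs1, hs2]
  -- final arithmetic
  have hx2 : 2 ≤ 2 ^ n := by
    calc (2 : ℕ) = 2 ^ 1 := rfl
    _ ≤ 2 ^ n := Nat.pow_le_pow_right (by norm_num) hn
  have hb4 : (4 : ℕ) ^ n = 2 ^ n * 2 ^ n := by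
    rw [show (4 : ℕ) = 2 * 2 from rfl, mul_pow]
  have hb2n : (2 : ℕ) ^ (2 * n) = 2 ^ n * 2 ^ n := by
    rw [two_mul, pow_add]
  have hb2n1 : (2 : ℕ) ^ (2 * n + 1) = 2 * (2 ^ n * 2 ^ n) := by
    rw [pow_succ, hb2n]
    ring
  have hA' : A = 2 ^ n * 2 ^ n - 2 ^ n := by rw [hAval, hb4]
  refine ⟨?_, ?_, ?_⟩
  · rw [hcard2, hAval]
  · rw [hcard4, hb2n1, hb4]
    exact arith4 _ _ hx2 hA'
  · rw [hsum, hb2n1, hb2n]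
    exact arithPsi _ _ hx2 hA'
end

section
/- If G is a finite group isomorphic to D₈^{∘n} ∘ C₄ (an almost extraspecial 2-group of order 2^{2n+2}), then the number of elements of order 2 in G is 2^{2n+1} − 1, the number of elements of order 4 is 2^{2n+1}, and ψ(G) = 12·2^{2n} − 1. -/
private lemma d8_sq : ∀ d : DihedralGroup 4, d ^ 2 = 1 ∨ d ^ 2 = DihedralGroup.r 2 := by decide

private lemma d8_center : ∀ x : DihedralGroup 4, (∀ g, x * g = g * x) →
    (x = 1 ∨ x = DihedralGroup.r 2) := by decide

private lemma c4_sq : ∀ x : Multiplicative (ZMod 4),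
    x ^ 2 = 1 ∨ x ^ 2 = Multiplicative.ofAdd 2 := by decide

private lemma c4_sq_one : ∀ x : Multiplicative (ZMod 4), x ^ 2 = 1 →
    (x = 1 ∨ x = Multiplicative.ofAdd 2) := by decide

private lemma mem_zpowers_sq_one {M : Type*} [Group M] {z a : M} (hz : z ^ 2 = 1)
    (ha : a ∈ Subgroup.zpowers z) : a = 1 ∨ a = z := by
  obtain ⟨m, rfl⟩ := ha
  have h2 : z ^ (2 : ℤ) = 1 := by rw [zpow_two, ← pow_two, hz]
  rcases Int.even_or_odd m with ⟨t, rfl⟩ | ⟨t, rfl⟩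
  · left
    show z ^ (t + t) = 1
    rw [← two_mul, zpow_mul, h2, one_zpow]
  · right
    show z ^ (2 * t + 1) = z
    rw [zpow_add, zpow_mul, h2, one_zpow, one_mul, zpow_one]

/-- If `G ≅ D₈^{∘n} ∘ C₄` (the almost extraspecial 2-group of order `2^(2n+2)`),
then `n₂(G) = 2^(2n+1) − 1`, `n₄(G) = 2^(2n+1)` and `ψ(G) = 12·2^(2n) − 1`. -/
theorem card_orders_psi_of_D8_C4_central_product {n : ℕ} (hn : 1 ≤ n)
    (G : Type*) [Group G] [Fintype G]
    (H : Option (Fin n) → Subgroup G)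
    (hcp : IsCentralProduct H)
    (hD8 : ∀ i : Fin n, Nonempty (H (some i) ≃* DihedralGroup 4))
    (hC4 : Nonempty (H none ≃* Multiplicative (ZMod 4)))
    (hcard : Nat.card G = 2 ^ (2 * n + 2)) :
    numOfOrder G 2 = 2 ^ (2 * n + 1) - 1 ∧ numOfOrder G 4 = 2 ^ (2 * n + 1) ∧
      ∑ x : G, orderOf x = 12 * 2 ^ (2 * n) - 1 := by
  classical
  obtain ⟨hc, hsup⟩ := hcp
  have eD : ∀ i : Fin n, H (some i) ≃* DihedralGroup 4 := fun i => Classical.choice (hD8 i)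
  obtain ⟨eC⟩ := hC4
  -- the designated central involutions in each factor
  let z : ∀ j : Option (Fin n), H j := fun j =>
    Option.rec (eC.symm (Multiplicative.ofAdd 2)) (fun i => (eD i).symm (DihedralGroup.r 2)) j
  have hzsome : ∀ i : Fin n, z (some i) = (eD i).symm (DihedralGroup.r 2) := fun i => rfl
  have hznone : z none = eC.symm (Multiplicative.ofAdd 2) := rfl
  have hz1 : ∀ j, z j ≠ 1 := by
    rintro (_ | i) h
    · have := congrArg eC h
      simp only [hznone, MulEquiv.apply_symm_apply, map_one] at this
      exact (by decide : (Multiplicative.ofAdd (2 : ZMod 4)) ≠ 1) this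
    · have := congrArg (eD i) h
      simp only [hzsome, MulEquiv.apply_symm_apply, map_one] at this
      exact (by decide : (DihedralGroup.r 2 : DihedralGroup 4) ≠ 1) this
  have hz2 : ∀ j, (z j) ^ 2 = 1 := by
    rintro (_ | i)
    · apply eC.injective
      rw [map_pow, hznone, MulEquiv.apply_symm_apply, map_one]
      decide
    · apply (eD i).injective
      rw [map_pow, hzsome, MulEquiv.apply_symm_apply, map_one]
      decide
  have hsq : ∀ j (h : H j), h ^ 2 = 1 ∨ h ^ 2 = z j := by
    rintro (_ | i) h
    · rcases c4_sq (eC h) with h' | h'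
      · left; apply eC.injective; rw [map_pow, h', map_one]
      · right; apply eC.injective; rw [map_pow, h', hznone, MulEquiv.apply_symm_apply]
    · rcases d8_sq ((eD i) h) with h' | h'
      · left; apply (eD i).injective; rw [map_pow, h', map_one]
      · right; apply (eD i).injective; rw [map_pow, h', hzsome, MulEquiv.apply_symm_apply]
  -- the product homomorphism
  have hcomm : Pairwise fun i j : Option (Fin n) => ∀ x y : G, x ∈ H i → y ∈ H j → Commute x y :=
    fun {i j} hij x y hx hy => hc i j hij x hx y hy
  let φ : (∀ j, H j) →* G := Subgroup.noncommPiCoprod hcomm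
  have hφs : Function.Surjective φ := by
    rw [← MonoidHom.range_eq_top]
    rw [show φ.range = ⨆ j, H j from Subgroup.noncommPiCoprod_range, hsup]
  have hφsingle : ∀ j (y : H j), φ (Pi.mulSingle j y) = y := fun j y =>
    Subgroup.noncommPiCoprod_mulSingle j y
  have hdecomp : ∀ (k : ∀ j, H j) (j), k = Pi.mulSingle j (k j) * Function.update k j 1 := by
    intro k j
    funext i
    by_cases hij : i = j
    · subst hij; simp
    · simp [hij, Function.update_of_ne hij]
  have hφapply : ∀ t : ∀ j, H j, φ t = Finset.univ.noncommProd (fun j => ((t j : G)))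
      (Pairwise.set_pairwise (fun {i j} hij => hcomm hij (t i) (t j) (t i).2 (t j).2) _) := by
    intro t
    exact Subgroup.noncommPiCoprod_apply hcomm t
  have hφupdate_comm : ∀ (k : ∀ j, H j) (j) (g : G), g ∈ H j →
      Commute (φ (Function.update k j 1)) g := by
    intro k j g hg
    rw [hφapply]
    refine (Finset.noncommProd_commute _ _ _ _ fun i _ => ?_).symm
    by_cases hij : i = j
    · subst hij
      rw [Function.update_self]
      simp only [OneMemClass.coe_one]
      exact Commute.one_right g
    · exact hc j i (fun e => hij e.symm) g hg _ (Function.update k j 1 i).2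
  have hker_single : ∀ k ∈ φ.ker, ∀ j, (↑(k j) : G) = (φ (Function.update k j 1))⁻¹ := by
    intro k hk j
    refine eq_inv_of_mul_eq_one_left ?_
    calc (↑(k j) : G) * φ (Function.update k j 1)
        = φ (Pi.mulSingle j (k j)) * φ (Function.update k j 1) := by rw [hφsingle]
      _ = φ (Pi.mulSingle j (k j) * Function.update k j 1) := (map_mul φ _ _).symm
      _ = φ k := by rw [← hdecomp]
      _ = 1 := hk
  have hker_comm : ∀ k ∈ φ.ker, ∀ j (g : G), g ∈ H j → Commute (↑(k j) : G) g := by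
    intro k hk j g hg
    rw [hker_single k hk j]
    exact (hφupdate_comm k j g hg).inv_left
  have hker_some : ∀ k ∈ φ.ker, ∀ i : Fin n, k (some i) ∈ Subgroup.zpowers (z (some i)) := by
    intro k hk i
    have hcen : ∀ d : DihedralGroup 4, eD i (k (some i)) * d = d * eD i (k (some i)) := by
      intro d
      obtain ⟨g, rfl⟩ := (eD i).surjective d
      rw [← map_mul, ← map_mul]
      congr 1
      exact Subtype.ext (hker_comm k hk (some i) g g.2)
    rcases d8_center _ hcen with h3 | h3
    · have : k (some i) = 1 := by
        apply (eD i).injective; rw [h3, map_one]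
      rw [this]; exact one_mem _
    · have : k (some i) = z (some i) := by
        apply (eD i).injective; rw [h3, hzsome, MulEquiv.apply_symm_apply]
      rw [this]; exact Subgroup.mem_zpowers _
  have hker_none : ∀ k ∈ φ.ker, k none ∈ Subgroup.zpowers (z none) := by
    intro k hk
    have hsq1 : (Function.update k none 1) ^ 2 = 1 := by
      funext j
      rw [Pi.pow_apply, Pi.one_apply]
      match j with
      | none => rw [Function.update_self]; exact one_pow 2
      | some i =>
        rw [Function.update_of_ne (by simp) 1 k]
        rcases mem_zpowers_sq_one (hz2 (some i)) (hker_some k hk i) with h | h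
        · rw [h]; exact one_pow 2
        · rw [h]; exact hz2 (some i)
    have h2 : (↑(k none) : G) ^ 2 = 1 := by
      rw [hker_single k hk none, inv_pow, ← map_pow, hsq1, map_one, inv_one]
    have h2' : (k none) ^ 2 = 1 := Subtype.ext (by rw [SubmonoidClass.coe_pow]; exact h2)
    have h3 : (eC (k none)) ^ 2 = 1 := by rw [← map_pow, h2', map_one]
    rcases c4_sq_one _ h3 with h4 | h4
    · have : k none = 1 := by apply eC.injective; rw [h4, map_one]
      rw [this]; exact one_mem _
    · have : k none = z none := by apply eC.injective; rw [h4, hznone, MulEquiv.apply_symm_apply]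
      rw [this]; exact Subgroup.mem_zpowers _
  haveI : Fact (Nat.Prime 2) := ⟨Nat.prime_two⟩
  -- cardinalities
  have hcardD : Nat.card (∀ j, H j) = 2 ^ (3 * n + 2) := by
    rw [Nat.card_pi, Fintype.prod_option]
    have h1 : Nat.card (H none) = 4 := by
      rw [Nat.card_congr eC.toEquiv, Nat.card_eq_fintype_card]; rfl
    have h2 : ∀ i : Fin n, Nat.card (H (some i)) = 8 := fun i => by
      rw [Nat.card_congr (eD i).toEquiv, Nat.card_eq_fintype_card, DihedralGroup.card]
    rw [h1]
    rw [Finset.prod_congr rfl (fun i _ => h2 i), Finset.prod_const, Finset.card_univ,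
      Fintype.card_fin]
    rw [show (8 : ℕ) = 2 ^ 3 from rfl, ← pow_mul, show (4 : ℕ) = 2 ^ 2 from rfl, ← pow_add]
    congr 1
    omega
  have hcardker : Nat.card φ.ker = 2 ^ n := by
    have h0 := Subgroup.card_eq_card_quotient_mul_card_subgroup φ.ker
    have hq : Nat.card ((∀ j, H j) ⧸ φ.ker) = 2 ^ (2 * n + 2) := by
      rw [Nat.card_congr (QuotientGroup.quotientKerEquivOfSurjective φ hφs).toEquiv, hcard]
    rw [hcardD, hq] at h0
    have h1 : (2 : ℕ) ^ (2 * n + 2) * 2 ^ n = 2 ^ (3 * n + 2) := by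
      rw [← pow_add]; congr 1; omega
    rw [← h1] at h0
    exact (Nat.eq_of_mul_eq_mul_left (Nat.pow_pos two_pos) h0.symm)
  -- the elementary abelian subgroup E
  set E : Subgroup (∀ j, H j) := Subgroup.pi Set.univ (fun j => Subgroup.zpowers (z j)) with hE
  have hkerE : φ.ker ≤ E := by
    intro k hk
    rw [hE, Subgroup.mem_pi]
    rintro (_ | i) _
    · exact hker_none k hk
    · exact hker_some k hk i
  have horder : ∀ j, orderOf (z j) = 2 := fun j => orderOf_eq_prime (hz2 j) (hz1 j)
  have hcardE : Nat.card E = 2 ^ (n + 1) := by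
    have e1 : E ≃ ∀ j, Subgroup.zpowers (z j) :=
      { toFun := fun x j => ⟨x.1 j, x.2 j (Set.mem_univ j)⟩
        invFun := fun y => ⟨fun j => y j, fun j _ => (y j).2⟩
        left_inv := fun x => rfl
        right_inv := fun y => rfl }
    rw [Nat.card_congr e1, Nat.card_pi]
    rw [Finset.prod_congr rfl (fun j _ => by rw [Nat.card_zpowers, horder j]),
      Finset.prod_const, Finset.card_univ, Fintype.card_option, Fintype.card_fin]
  set K : Subgroup E := φ.ker.subgroupOf E with hK
  have hcardK : Nat.card K = 2 ^ n := by
    rw [hK, Nat.card_congr (Subgroup.subgroupOfEquivOfLe hkerE).toEquiv, hcardker]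
  have hidx : K.index = 2 := by
    have h0 := Subgroup.index_mul_card K
    rw [hcardK, hcardE, pow_succ, mul_comm (2 ^ n) 2] at h0
    exact Nat.eq_of_mul_eq_mul_right (Nat.pow_pos two_pos) h0
  -- the single-coordinate central involutions
  have hmemE : ∀ j, Pi.mulSingle j (z j) ∈ E := by
    intro j
    rw [hE, Subgroup.mem_pi]
    intro j' _
    by_cases h : j' = j
    · subst h; rw [Pi.mulSingle_eq_same]; exact Subgroup.mem_zpowers _
    · rw [Pi.mulSingle_eq_of_ne h]; exact one_mem _
  have hnotker : ∀ j, Pi.mulSingle j (z j) ∉ φ.ker := by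
    intro j h
    rw [MonoidHom.mem_ker, hφsingle] at h
    exact hz1 j (OneMemClass.coe_eq_one.mp h)
  have hGsq : ∀ j, ((z j).val) ^ 2 = 1 := by
    intro j
    simpa using congrArg Subtype.val (hz2 j)
  -- the key identification: all central involutions agree in G
  have hkey : ∀ j j' : Option (Fin n), (z j).val = (z j').val := by
    intro j j'
    have ha : (⟨Pi.mulSingle j (z j), hmemE j⟩ : E) ∉ K := fun hh =>
      hnotker j (Subgroup.mem_subgroupOf.mp hh)
    have hb : (⟨Pi.mulSingle j' (z j'), hmemE j'⟩ : E) ∉ K := fun hh =>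
      hnotker j' (Subgroup.mem_subgroupOf.mp hh)
    have hab : (⟨Pi.mulSingle j (z j), hmemE j⟩ : E) * ⟨Pi.mulSingle j' (z j'), hmemE j'⟩ ∈ K :=
      (Subgroup.mul_mem_iff_of_index_two hidx).mpr
        ⟨fun t => absurd t ha, fun t => absurd t hb⟩
    have hker' : Pi.mulSingle j (z j) * Pi.mulSingle j' (z j') ∈ φ.ker :=
      Subgroup.mem_subgroupOf.mp hab
    rw [MonoidHom.mem_ker, map_mul, hφsingle, hφsingle] at hker'
    have := eq_inv_of_mul_eq_one_left hker'
    rw [this]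
    exact inv_eq_of_mul_eq_one_left (by rw [← pow_two]; exact hGsq j')
  set ζ : G := (z none).val with hζdef
  have hζ1 : ζ ≠ 1 := fun h => hz1 none (OneMemClass.coe_eq_one.mp h)
  have hζ2 : ζ ^ 2 = 1 := hGsq none
  have hzζ : ∀ j, (z j).val = ζ := fun j => hkey j none
  -- every square lies in {1, ζ}
  have sqG : ∀ x : G, x ^ 2 = 1 ∨ x ^ 2 = ζ := by
    intro x
    obtain ⟨t, rfl⟩ := hφs x
    have h1 : (φ t) ^ 2 = φ (t ^ 2) := (map_pow φ t 2).symm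
    have h2 : φ (t ^ 2) ∈ Subgroup.zpowers ζ := by
      rw [hφapply]
      refine Subgroup.noncommProd_mem _ _ fun j _ => ?_
      have h3 : ((t ^ 2) j).val = ((t j) ^ 2).val := by rw [Pi.pow_apply]
      rw [h3]
      rcases hsq j (t j) with h | h
      · rw [h, OneMemClass.coe_one]; exact one_mem _
      · rw [h, hzζ j]; exact Subgroup.mem_zpowers _
    have h2' : (φ t) ^ 2 ∈ Subgroup.zpowers ζ := by rw [h1]; exact h2
    exact mem_zpowers_sq_one hζ2 h2'
  -- a central element whose square is ζ
  set y : G := (eC.symm (Multiplicative.ofAdd 1) : H none).val with hy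
  have hy2 : y ^ 2 = ζ := by
    rw [hy, ← SubmonoidClass.coe_pow]
    have h5 : (eC.symm (Multiplicative.ofAdd 1)) ^ 2 = z none := by
      apply eC.injective
      rw [map_pow, MulEquiv.apply_symm_apply, hznone, MulEquiv.apply_symm_apply]
      decide
    rw [h5, hzζ none]
  have habel : ∀ a b : H none, a * b = b * a := fun a b =>
    eC.injective (by rw [map_mul, map_mul, mul_comm])
  have hycomm : ∀ g : G, Commute y g := by
    intro g
    have hg : g ∈ Subgroup.centralizer {y} := by
      have hsup' : g ∈ ⨆ j, H j := by rw [hsup]; trivial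
      refine (iSup_le ?_ : (⨆ j, H j) ≤ Subgroup.centralizer {y}) hsup'
      rintro (_ | i) x hx <;> rw [Subgroup.mem_centralizer_iff] <;>
        intro h' hh' <;> rw [Set.mem_singleton_iff] at hh' <;> subst hh'
      · have h2 := congrArg Subtype.val
          (habel (eC.symm (Multiplicative.ofAdd 1)) ⟨x, hx⟩)
        rw [hy]
        exact h2
      · exact hc none (some i) (by simp) y
          (by rw [hy]; exact (eC.symm (Multiplicative.ofAdd 1) : H none).2) x hx
    rw [Subgroup.mem_centralizer_iff] at hg
    exact hg y (Set.mem_singleton y)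
  -- counting
  have eAB : {x : G // x ^ 2 = 1} ≃ {x : G // x ^ 2 = ζ} :=
    { toFun := fun a => ⟨a.1 * y, by
        rw [((hycomm a.1).symm).mul_pow, a.2, hy2, one_mul]⟩
      invFun := fun b => ⟨b.1 * y⁻¹, by
        rw [((hycomm b.1).symm.inv_right).mul_pow, b.2, inv_pow, hy2, mul_inv_cancel]⟩
      left_inv := fun a => Subtype.ext (by simp)
      right_inv := fun b => Subtype.ext (by simp) }
  have hAB : Nat.card {x : G // x ^ 2 = 1} = Nat.card {x : G // x ^ 2 = ζ} :=
    Nat.card_congr eAB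
  have hdisj : Disjoint (fun x : G => x ^ 2 = 1) (fun x : G => x ^ 2 = ζ) := by
    rw [disjoint_iff_inf_le]
    intro x hx
    have h1 : x ^ 2 = 1 := hx.1
    have h2 : x ^ 2 = ζ := hx.2
    exact hζ1 (by rw [← h2, h1])
  have hsplit : Nat.card {x : G // x ^ 2 = 1} + Nat.card {x : G // x ^ 2 = ζ}
      = 2 ^ (2 * n + 2) := by
    have h0 : Nat.card {x : G // x ^ 2 = 1 ∨ x ^ 2 = ζ} =
        Nat.card {x : G // x ^ 2 = 1} + Nat.card {x : G // x ^ 2 = ζ} := by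
      rw [Nat.card_congr (subtypeOrEquiv _ _ hdisj), Nat.card_sum]
    rw [← h0, Nat.card_congr (Equiv.subtypeUnivEquiv sqG), hcard]
  have hcA : Nat.card {x : G // x ^ 2 = 1} = 2 ^ (2 * n + 1) := by
    have h1 : (2:ℕ) ^ (2 * n + 2) = 2 ^ (2 * n + 1) * 2 := pow_succ 2 (2 * n + 1)
    omega
  have hcB : Nat.card {x : G // x ^ 2 = ζ} = 2 ^ (2 * n + 1) := by omega
  -- order characterizations
  have hord2iff : ∀ x : G, orderOf x = 2 ↔ (x ^ 2 = 1 ∧ x ≠ 1) := by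
    intro x
    constructor
    · intro h
      refine ⟨by rw [← h]; exact pow_orderOf_eq_one x, fun hx => ?_⟩
      rw [hx, orderOf_one] at h
      exact absurd h (by norm_num)
    · rintro ⟨h1, h2⟩
      exact orderOf_eq_prime h1 h2
  have hord4iff : ∀ x : G, orderOf x = 4 ↔ x ^ 2 = ζ := by
    intro x
    constructor
    · intro h
      rcases sqG x with h1 | h1
      · exfalso
        have hd : orderOf x ∣ 2 := orderOf_dvd_of_pow_eq_one h1
        rw [h] at hd
        exact absurd (Nat.le_of_dvd two_pos hd) (by norm_num)
      · exact h1
    · intro h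
      have h4 : x ^ 4 = 1 := by rw [show 4 = 2 * 2 from rfl, pow_mul, h, hζ2]
      have hd : orderOf x ∣ 2 ^ 2 := orderOf_dvd_of_pow_eq_one h4
      have h2ne : x ^ 2 ≠ 1 := by rw [h]; exact hζ1
      rcases (Nat.dvd_prime_pow Nat.prime_two).mp hd with ⟨k, hk, hek⟩
      interval_cases k
      · rw [pow_zero] at hek
        exact absurd (by rw [orderOf_eq_one_iff.mp hek, one_pow]) h2ne
      · rw [pow_one] at hek
        exact absurd (by rw [← hek]; exact pow_orderOf_eq_one x) h2ne
      · rw [hek]; norm_num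
  have hone : Nat.card {x : G // x = (1:G)} = 1 := by
    haveI : Unique {x : G // x = (1:G)} := ⟨⟨⟨1, rfl⟩⟩, fun a => Subtype.ext a.2⟩
    exact Nat.card_unique
  -- the two counts
  have hnum2 : numOfOrder G 2 = 2 ^ (2 * n + 1) - 1 := by
    have hiff : ∀ x : G, x ^ 2 = 1 ↔ ((orderOf x = 2) ∨ x = 1) := by
      intro x
      rw [hord2iff x]
      constructor
      · intro h
        by_cases hx : x = 1
        · right; exact hx
        · left; exact ⟨h, hx⟩
      · rintro (⟨h, _⟩ | h)
        · exact h
        · rw [h, one_pow]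
    have hdisj2 : Disjoint (fun x : G => orderOf x = 2) (fun x : G => x = 1) := by
      rw [disjoint_iff_inf_le]
      intro x hx
      have h1 : orderOf x = 2 := hx.1
      have h2 : x = (1:G) := hx.2
      rw [h2, orderOf_one] at h1
      exact absurd h1 (by norm_num)
    have h0 : Nat.card {x : G // x ^ 2 = 1} =
        Nat.card {x : G // orderOf x = 2} + Nat.card {x : G // x = (1:G)} := by
      rw [Nat.card_congr (Equiv.subtypeEquivRight hiff),
        Nat.card_congr (subtypeOrEquiv _ _ hdisj2), Nat.card_sum]
    rw [numOfOrder]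
    omega
  have hnum4 : numOfOrder G 4 = 2 ^ (2 * n + 1) := by
    rw [numOfOrder, Nat.card_congr (Equiv.subtypeEquivRight hord4iff), hcB]
  refine ⟨hnum2, hnum4, ?_⟩
  -- the sum of element orders
  have hindic : ∀ (p : G → Prop) [DecidablePred p] (c : ℕ), ∑ x : G, (if p x then c else 0)
      = c * Nat.card {x : G // p x} := by
    intro p _ c
    rw [Nat.card_eq_fintype_card, Fintype.card_subtype, ← Finset.sum_filter,
      Finset.sum_const, smul_eq_mul, mul_comm]
  have hsum1 : ∑ x : G, orderOf x =
      ∑ x : G, ((if x = 1 then 1 else 0) + (if orderOf x = 2 then 2 else 0)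
        + (if ¬ x ^ 2 = 1 then 4 else 0)) := by
    refine Finset.sum_congr rfl fun x _ => ?_
    by_cases h1 : x = 1
    · subst h1
      simp [orderOf_one]
    · by_cases h2 : x ^ 2 = 1
      · rw [if_neg h1, if_pos ((hord2iff x).mpr ⟨h2, h1⟩), if_neg (not_not.mpr h2)]
        rw [(hord2iff x).mpr ⟨h2, h1⟩]
      · have h3 : x ^ 2 = ζ := (sqG x).resolve_left h2
        rw [if_neg h1, if_neg (fun hh => h2 ((hord2iff x).mp hh).1), if_pos h2]
        rw [(hord4iff x).mpr h3]
  have hnot : Nat.card {x : G // ¬ x ^ 2 = 1} = Nat.card {x : G // x ^ 2 = ζ} := by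
    refine Nat.card_congr (Equiv.subtypeEquivRight fun x => ?_)
    constructor
    · intro h
      exact (sqG x).resolve_left h
    · intro h hh
      exact hζ1 (by rw [← h, hh])
  have hnum2' : Nat.card {x : G // orderOf x = 2} = 2 ^ (2 * n + 1) - 1 := hnum2
  rw [hsum1, Finset.sum_add_distrib, Finset.sum_add_distrib, hindic, hindic, hindic,
    hone, hnot, hcB, hnum2']
  have hp : (2:ℕ) ^ (2 * n + 1) = 2 ^ (2 * n) * 2 := pow_succ 2 (2 * n)
  have hpos : (1:ℕ) ≤ 2 ^ (2 * n) := Nat.one_le_two_pow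
  rw [hp]
  generalize (2:ℕ) ^ (2 * n) = B at hpos ⊢
  omega
end
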